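/- arXiv:2510.17983 — 13 statements merged into one kernel-verified Lean document; each statement's English description precedes it below -/
import Mathlib

section
/- Let A be an affine space, and let φ, α : A → A be affine endomorphisms. Define the bracket {a,b} = φ(a). Then (A, {-,-}, α) is a Hom-Lie affgebra: the bracket is bi-affine, affinely anti-symmetric, and satisfies the affine Hom-Jacobi identity. -/
/-- An affine space over a field `K` in the sense of Brzeziński:
an abelian heap with a compatible ternary `K`-action. -/
structure AffSp (K A : Type*) [Field K] where
  t : A → A → A → A
  act : K → A → A → A
  t_assoc : ∀ a b c d e, t (t a b c) d e = t a b (t c d e)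
  t_malL : ∀ a b, t a a b = b
  t_malR : ∀ b a, t b a a = b
  t_comm : ∀ a b c, t a b c = t c b a
  act_heap : ∀ (ξ : K) a b c d, act ξ a (t b c d) = t (act ξ a b) (act ξ a c) (act ξ a d)
  act_heapK : ∀ (ξ ζ γ : K) a b,
    act (ξ - ζ + γ) a b = t (act ξ a b) (act ζ a b) (act γ a b)
  act_mul : ∀ (ξ ζ : K) a b, act (ξ * ζ) a b = act ξ a (act ζ a b)
  act_base : ∀ (ξ : K) a b c, act ξ a b = t (act ξ c b) (act ξ c a) a
  act_zero : ∀ a b, act (0 : K) a b = a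
  act_one : ∀ a b, act (1 : K) a b = b

/-- `f : A → A` is an affine map (morphism of affine spaces). -/
def AffSp.IsAffineMap {K A : Type*} [Field K] (S : AffSp K A) (f : A → A) : Prop :=
  (∀ a b c, f (S.t a b c) = S.t (f a) (f b) (f c)) ∧
  (∀ (ξ : K) (a b : A), f (S.act ξ a b) = S.act ξ (f a) (f b))

/-- `m : A × A → A` is bi-affine. -/
def AffSp.IsBiAffine {K A : Type*} [Field K] (S : AffSp K A) (m : A → A → A) : Prop :=
  (∀ a b c d, m (S.t a b c) d = S.t (m a d) (m b d) (m c d)) ∧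
  (∀ (ξ : K) (a b d : A), m (S.act ξ a b) d = S.act ξ (m a d) (m b d)) ∧
  (∀ a b c d, m d (S.t a b c) = S.t (m d a) (m d b) (m d c)) ∧
  (∀ (ξ : K) (a b d : A), m d (S.act ξ a b) = S.act ξ (m d a) (m d b))

/-- Affine anti-symmetry: ⟨{a,b},{a,a},{b,a}⟩ = {b,b}. -/
def AffSp.AntiSym {K A : Type*} [Field K] (S : AffSp K A) (br : A → A → A) : Prop :=
  ∀ a b, S.t (br a b) (br a a) (br b a) = br b b

/-- Affine Hom-Jacobi identity:
⟨{α(a),{b,c}},{α(a),{a,a}},{α(b),{c,a}},{α(b),{b,b}},{α(c),{a,b}}⟩ = {α(c),{c,c}}. -/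
def AffSp.HomJacobi {K A : Type*} [Field K] (S : AffSp K A) (br : A → A → A)
    (α : A → A) : Prop :=
  ∀ a b c,
    S.t (S.t (br (α a) (br b c)) (br (α a) (br a a)) (br (α b) (br c a)))
      (br (α b) (br b b)) (br (α c) (br a b)) = br (α c) (br c c)

/-- for affine endomorphisms φ, α, the bracket {a,b} = φ(a)
makes (A,{-,-},α) a Hom-Lie affgebra. -/
theorem stmt_4 {K A : Type*} [Field K] (S : AffSp K A) (φ α : A → A)
    (hφ : S.IsAffineMap φ) (hα : S.IsAffineMap α) :
    let br : A → A → A := fun a _ => φ a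
    S.IsBiAffine br ∧ S.AntiSym br ∧ S.HomJacobi br α := by
  intro br
  have hactaa : ∀ (ξ : K) (a : A), S.act ξ a a = a := by
    intro ξ a
    rw [S.act_base ξ a a a, S.t_malL]
  refine ⟨⟨?_, ?_, ?_, ?_⟩, ?_, ?_⟩
  · intro a b c d; exact hφ.1 a b c
  · intro ξ a b d; exact hφ.2 ξ a b
  · intro a b c d; simp only [br]; rw [S.t_malL]
  · intro ξ a b d; simp only [br]; rw [hactaa]
  · intro a b; simp only [br]; rw [S.t_malL]
  · intro a b c; simp only [br]; rw [S.t_malL, S.t_malL]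
end

section
/- Let A be an affine K-space, α : A → A an affine endomorphism, and ξ ∈ K. Define the bracket {a,b} = ξ ▶_a b. Then (A, {-,-}, α) is a Hom-Lie affgebra, i.e., the bracket is bi-affine, satisfies affine anti-symmetry ⟨{a,b},{a,a},{b,a}⟩ = {b,b}, and the affine Hom-Jacobi identity ⟨{α(a),{b,c}}, {α(a),{a,a}}, {α(b),{c,a}}, {α(b),{b,b}}, {α(c),{a,b}}⟩ = {α(c),{c,c}}. -/
namespace HLAux

variable {K A : Type*} [Field K]

lemma ht' (S : AffSp K A) (o x y z : A) :
    S.t x y z = S.t (S.t x o (S.t o y o)) o z := by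
  have h1 : S.t x o (S.t o y o) = S.t x y o := by
    rw [← S.t_assoc, S.t_malR]
  rw [h1, S.t_assoc, S.t_malL]

lemma act_self (S : AffSp K A) (ζ : K) (a : A) : S.act ζ a a = a := by
  have h := S.act_mul ζ 0 a a
  rw [mul_zero, S.act_zero] at h
  exact h.symm

/-- the abelian group on `A` with origin `o`. -/
def grp (S : AffSp K A) (o : A) : AddCommGroup A := by
  letI : Zero A := ⟨o⟩
  letI : Add A := ⟨fun x y => S.t x o y⟩
  letI : Neg A := ⟨fun x => S.t o x o⟩
  exact
  { add := (· + ·)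
    zero := 0
    neg := (- ·)
    add_assoc := fun x y z => S.t_assoc x o y o z
    zero_add := S.t_malL o
    add_zero := fun x => S.t_malR x o
    neg_add_cancel := fun x => by
      show S.t (S.t o x o) o x = o
      rw [S.t_assoc, S.t_malL, S.t_malR]
    add_comm := fun x y => S.t_comm x o y
    nsmul := nsmulRec
    zsmul := zsmulRec }

/-- the `K`-module structure on `A` with origin `o`. -/
def mod (S : AffSp K A) (o : A) : @Module K A _ (grp S o).toAddCommMonoid := by
  letI := grp S o
  exact
  { smul := fun ζ x => S.act ζ o x
    one_smul := S.act_one o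
    mul_smul := fun ζ γ x => S.act_mul ζ γ o x
    smul_zero := fun ζ => act_self S ζ o
    smul_add := fun ζ x y => by
      show S.act ζ o (S.t x o y) = S.t (S.act ζ o x) o (S.act ζ o y)
      rw [S.act_heap, act_self]
    add_smul := fun ζ γ x => by
      show S.act (ζ + γ) o x = S.t (S.act ζ o x) o (S.act γ o x)
      have h := S.act_heapK ζ 0 γ o x
      rw [sub_zero, S.act_zero] at h
      exact h
    zero_smul := fun x => S.act_zero o x }

end HLAux

/-- for an affine endomorphism α and ξ ∈ K, the bracket
{a,b} = ξ ▶_a b makes (A,{-,-},α) a Hom-Lie affgebra. -/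
theorem stmt_5 {K A : Type*} [Field K] (S : AffSp K A) (α : A → A)
    (hα : S.IsAffineMap α) (ξ : K) :
    let br : A → A → A := fun a b => S.act ξ a b
    S.IsBiAffine br ∧ S.AntiSym br ∧ S.HomJacobi br α := by
  intro br
  have hbr : br = fun a b => S.act ξ a b := rfl
  refine ⟨⟨?_, ?_, ?_, ?_⟩, ?_, ?_⟩ <;> simp only [hbr] <;>
    [ (intro a b c d); (intro ζ a b d); (intro a b c d); (intro ζ a b d);
      (intro a b); (intro a b c) ] <;>
  · letI := HLAux.grp S a
    letI := HLAux.mod S a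
    have ht : ∀ x y z : A, S.t x y z = x - y + z := fun x y z => HLAux.ht' S a x y z
    have ha : ∀ (ζ : K) (x y : A), S.act ζ x y = ζ • y - ζ • x + x :=
      fun ζ x y => (S.act_base ζ x y a).trans (HLAux.ht' S a _ _ _)
    simp only [ha, ht]
    module
end

section
/- Let (A, μ, α) be a multiplicative Hom-associative affgebra (writing μ(a,b) = ab, with α(ab) = α(a)α(b)). Then the bracket {a,b} = ⟨ab, ba, α(b)⟩ makes (A, {-,-}, α) a Hom-Lie affgebra: the bracket is bi-affine, affinely anti-symmetric, and satisfies the affine Hom-Jacobi identity. -/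
section Aux

private theorem stmt_6_aux {K A : Type*} [Field K] (S : AffSp K A) (mul : A → A → A)
    (α : A → A)
    (hmul : S.IsBiAffine mul) (hα : S.IsAffineMap α)
    (hassoc : ∀ a b c, mul (α a) (mul b c) = mul (mul a b) (α c))
    (hmult : ∀ a b, α (mul a b) = mul (α a) (α b)) (o : A) :
    let br : A → A → A := fun a b => S.t (mul a b) (mul b a) (α b)
    S.IsBiAffine br ∧ S.AntiSym br ∧ S.HomJacobi br α := by
  letI : Zero A := ⟨o⟩
  letI : Add A := ⟨fun a b => S.t a o b⟩
  letI : Neg A := ⟨fun a => S.t o a o⟩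
  letI : AddCommGroup A :=
    { add_assoc := fun a b c => S.t_assoc a o b o c
      zero_add := fun a => S.t_malL o a
      add_zero := fun a => S.t_malR a o
      add_comm := fun a b => S.t_comm a o b
      nsmul := nsmulRec
      zsmul := zsmulRec
      neg_add_cancel := fun a => by
        show S.t (S.t o a o) o a = o
        rw [S.t_assoc, S.t_malL, S.t_malR] }
  have ht : ∀ a b c, S.t a b c = a - b + c := by
    intro a b c
    rw [sub_eq_add_neg]
    show S.t a b c = S.t (S.t a o (S.t o b o)) o c
    rw [show S.t a o (S.t o b o) = S.t a b o by rw [← S.t_assoc, S.t_malR]]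
    rw [S.t_assoc, S.t_malL]
  obtain ⟨σ, hσt, hact⟩ : ∃ σ : K → A → A,
      (∀ (ξ : K) (a b c : A), σ ξ (a - b + c) = σ ξ a - σ ξ b + σ ξ c) ∧
      (∀ (ξ : K) (a b : A), S.act ξ a b = σ ξ b - σ ξ a + a) := by
    refine ⟨fun ξ x => S.act ξ o x, fun ξ a b c => ?_, fun ξ a b => ?_⟩
    · show S.act ξ o (a - b + c) = S.act ξ o a - S.act ξ o b + S.act ξ o c
      rw [← ht a b c, S.act_heap, ht]
    · show S.act ξ a b = S.act ξ o b - S.act ξ o a + a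
      rw [S.act_base ξ a b o, ht]
  intro br
  refine ⟨⟨?_, ?_, ?_, ?_⟩, ?_, ?_⟩
  · intro a b c d
    simp only [br, hmul.1, hmul.2.2.1, hα.1]
    simp only [ht]
    abel
  · intro ξ a b d
    simp only [br, hmul.2.1, hmul.2.2.2, hα.2]
    simp only [ht]
    simp only [hact]
    simp only [hσt]
    abel
  · intro a b c d
    simp only [br, hmul.1, hmul.2.2.1, hα.1]
    simp only [ht]
    abel
  · intro ξ a b d
    simp only [br, hmul.2.1, hmul.2.2.2, hα.2]
    simp only [ht]
    simp only [hact]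
    simp only [hσt]
    abel
  · intro a b
    simp only [br, hmul.1, hmul.2.2.1, hα.1]
    simp only [ht]
    abel
  · intro a b c
    simp only [br, hmul.1, hmul.2.2.1, hα.1]
    simp only [hassoc, ← hmult]
    simp only [ht]
    abel

end Aux

/-- a multiplicative Hom-associative affgebra gives a Hom-Lie affgebra
via {a,b} = ⟨ab, ba, α(b)⟩. -/
theorem stmt_6 {K A : Type*} [Field K] (S : AffSp K A) (mul : A → A → A) (α : A → A)
    (hmul : S.IsBiAffine mul) (hα : S.IsAffineMap α)
    (hassoc : ∀ a b c, mul (α a) (mul b c) = mul (mul a b) (α c))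
    (hmult : ∀ a b, α (mul a b) = mul (α a) (α b)) :
    let br : A → A → A := fun a b => S.t (mul a b) (mul b a) (α b)
    S.IsBiAffine br ∧ S.AntiSym br ∧ S.HomJacobi br α := by
  cases isEmpty_or_nonempty A with
  | inl h =>
    exact ⟨⟨fun a => isEmptyElim a, fun ξ a => isEmptyElim a, fun a => isEmptyElim a,
      fun ξ a => isEmptyElim a⟩, fun a => isEmptyElim a, fun a => isEmptyElim a⟩
  | inr h =>
    exact stmt_6_aux S mul α hmul hα hassoc hmult h.some
end

section
/- Let (A, •, α) be a multiplicative right Hom-pre-Lie affgebra, i.e., α(a)•(b•c) = ⟨(a•b)•α(c), (a•c)•α(b), α(a)•(c•b)⟩ and α(a•b) = α(a)•α(b). Then the bracket {a,b} = ⟨a•b, b•a, α(b)⟩ makes (A, {-,-}, α) a Hom-Lie affgebra. -/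
/-- a multiplicative right Hom-pre-Lie affgebra gives a Hom-Lie affgebra
via {a,b} = ⟨a•b, b•a, α(b)⟩. -/
theorem stmt_7 {K A : Type*} [Field K] (S : AffSp K A) (mul : A → A → A) (α : A → A)
    (hmul : S.IsBiAffine mul) (hα : S.IsAffineMap α)
    (hpre : ∀ a b c, mul (α a) (mul b c) =
      S.t (mul (mul a b) (α c)) (mul (mul a c) (α b)) (mul (α a) (mul c b)))
    (hmult : ∀ a b, α (mul a b) = mul (α a) (α b)) :
    let br : A → A → A := fun a b => S.t (mul a b) (mul b a) (α b)
    S.IsBiAffine br ∧ S.AntiSym br ∧ S.HomJacobi br α := by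
  intro br
  rcases isEmpty_or_nonempty A with h | h
  · exact ⟨⟨fun a => (h.false a).elim, fun ξ a => (h.false a).elim,
      fun a => (h.false a).elim, fun ξ a => (h.false a).elim⟩,
      fun a => (h.false a).elim, fun a => (h.false a).elim⟩
  · obtain ⟨o⟩ := h
    letI : Zero A := ⟨o⟩
    letI : Add A := ⟨fun a b => S.t a o b⟩
    letI : Neg A := ⟨fun a => S.t o a o⟩
    letI : Sub A := ⟨fun a b => S.t a b o⟩
    letI : AddCommGroup A :=
      { add := fun a b => S.t a o b
        add_assoc := fun a b c => S.t_assoc a o b o c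
        zero := o
        zero_add := fun b => S.t_malL o b
        add_zero := fun a => S.t_malR a o
        nsmul := nsmulRec
        neg := fun a => S.t o a o
        sub := fun a b => S.t a b o
        sub_eq_add_neg := fun a b => by
          show S.t a b o = S.t a o (S.t o b o)
          rw [← S.t_assoc a o o b o, S.t_malR]
        zsmul := zsmulRec
        neg_add_cancel := fun a => by
          show S.t (S.t o a o) o a = o
          rw [S.t_assoc, S.t_malL, S.t_malR]
        add_comm := fun a b => S.t_comm a o b }
    have hso : ∀ ξ : K, S.act ξ o o = o := by
      intro ξ
      have h := S.act_base ξ o o o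
      rw [S.t_malL] at h
      exact h
    letI : Module K A :=
      { smul := fun ξ x => S.act ξ o x
        one_smul := fun x => S.act_one o x
        mul_smul := fun ξ ζ x => S.act_mul ξ ζ o x
        smul_zero := fun ξ => hso ξ
        smul_add := fun ξ x y => by
          show S.act ξ o (S.t x o y) = S.t (S.act ξ o x) o (S.act ξ o y)
          rw [S.act_heap, hso]
        add_smul := fun ξ ζ x => by
          show S.act (ξ + ζ) o x = S.t (S.act ξ o x) o (S.act ζ o x)
          rw [show ξ + ζ = ξ - 0 + ζ by ring, S.act_heapK, S.act_zero]
        zero_smul := fun x => S.act_zero o x }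
    have ht : ∀ a b c : A, S.t a b c = a - b + c := by
      intro a b c
      show S.t a b c = S.t (S.t a b o) o c
      rw [S.t_assoc, S.t_malL]
    have hsmul : ∀ (ξ : K) (x : A), ξ • x = S.act ξ o x := fun _ _ => rfl
    have hact : ∀ (ξ : K) (a b : A), S.act ξ a b = ξ • b - ξ • a + a := by
      intro ξ a b
      rw [S.act_base ξ a b o, ht, hsmul, hsmul]
    have hbr : ∀ x y : A, br x y = mul x y - mul y x + α y :=
      fun x y => ht (mul x y) (mul y x) (α y)
    have hpre' : ∀ a b c, mul (α a) (mul b c) =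
        mul (mul a b) (α c) - mul (mul a c) (α b) + mul (α a) (mul c b) := by
      intro a b c
      rw [hpre a b c, ht]
    refine ⟨⟨?_, ?_, ?_, ?_⟩, ?_, ?_⟩
    · intro a b c d
      simp only [hbr]
      rw [hmul.1, hmul.2.2.1]
      simp only [ht]
      abel
    · intro ξ a b d
      simp only [hbr]
      rw [hmul.2.1, hmul.2.2.2]
      simp only [hact, smul_sub, smul_add]
      abel
    · intro a b c d
      simp only [hbr]
      rw [hmul.2.2.1, hmul.1, hα.1]
      simp only [ht]
      abel
    · intro ξ a b d
      simp only [hbr]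
      rw [hmul.2.2.2, hmul.2.1, hα.2]
      simp only [hact, smul_sub, smul_add]
      abel
    · intro a b
      simp only [hbr, ht]
      abel
    have mL : ∀ x y z d : A, mul (x - y + z) d = mul x d - mul y d + mul z d := by
      intro x y z d
      rw [← ht x y z, hmul.1, ht]
    have mR : ∀ x y z d : A, mul d (x - y + z) = mul d x - mul d y + mul d z := by
      intro x y z d
      rw [← ht x y z, hmul.2.2.1, ht]
    have aT : ∀ x y z : A, α (x - y + z) = α x - α y + α z := by
      intro x y z
      rw [← ht x y z, hα.1, ht]
    intro a b c
    simp only [hbr, ht]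
    simp only [mL, mR, aT, hmult]
    rw [hpre' a b c, hpre' b c a, hpre' c a b]
    abel
end

section
/- Let (A, μ) be an associative affgebra and α : A → A be an affgebra endomorphism (affine and multiplicative: α(μ(a,b)) = μ(α(a),α(b))). Then (A, μ_α, α) with μ_α = α ∘ μ is a Hom-associative affgebra: μ_α is bi-affine and μ_α(α(a), μ_α(b,c)) = μ_α(μ_α(a,b), α(c)) for all a,b,c ∈ A. -/
/-- composing an associative affgebra multiplication with an affgebra
endomorphism α yields a Hom-associative affgebra (A, μ_α = α ∘ μ, α). -/
theorem stmt_8 {K A : Type*} [Field K] (S : AffSp K A) (mul : A → A → A) (α : A → A)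
    (hmul : S.IsBiAffine mul) (hα : S.IsAffineMap α)
    (hassoc : ∀ a b c, mul a (mul b c) = mul (mul a b) c)
    (hmult : ∀ a b, α (mul a b) = mul (α a) (α b)) :
    let mulα : A → A → A := fun a b => α (mul a b)
    S.IsBiAffine mulα ∧
    (∀ a b c, mulα (α a) (mulα b c) = mulα (mulα a b) (α c)) := by
  intro mulα
  obtain ⟨h1, h2, h3, h4⟩ := hmul
  obtain ⟨ht, ha⟩ := hα
  refine ⟨⟨?_, ?_, ?_, ?_⟩, ?_⟩
  · intro a b c d; simp only [mulα, h1, ht]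
  · intro ξ a b d; simp only [mulα, h2, ha]
  · intro a b c d; simp only [mulα, h3, ht]
  · intro ξ a b d; simp only [mulα, h4, ha]
  · intro a b c; simp only [mulα, hmult, hassoc]
end

section
/- Let (A, {-,-}) be a Lie affgebra and α : A → A a Lie affgebra endomorphism (affine with α{a,b} = {α(a),α(b)}). Then (A, {-,-}_α, α) with {a,b}_α = α({a,b}) is a Hom-Lie affgebra. -/
/-- composing a Lie affgebra bracket with a Lie affgebra endomorphism α
yields a Hom-Lie affgebra (A, {-,-}_α = α ∘ {-,-}, α). -/
theorem stmt_9 {K A : Type*} [Field K] (S : AffSp K A) (br : A → A → A) (α : A → A)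
    (hbr : S.IsBiAffine br) (hanti : S.AntiSym br)
    (hjac : S.HomJacobi br id) (hα : S.IsAffineMap α)
    (hmult : ∀ a b, α (br a b) = br (α a) (α b)) :
    let brα : A → A → A := fun a b => α (br a b)
    S.IsBiAffine brα ∧ S.AntiSym brα ∧ S.HomJacobi brα α := by
  intro brα
  obtain ⟨ht, hact⟩ := hα
  obtain ⟨h1, h2, h3, h4⟩ := hbr
  refine ⟨⟨fun a b c d => ?_, fun ξ a b d => ?_, fun a b c d => ?_, fun ξ a b d => ?_⟩,
    fun a b => ?_, fun a b c => ?_⟩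
  · show α (br (S.t a b c) d) = _; rw [h1, ht]
  · show α (br (S.act ξ a b) d) = _; rw [h2, hact]
  · show α (br d (S.t a b c)) = _; rw [h3, ht]
  · show α (br d (S.act ξ a b)) = _; rw [h4, hact]
  · show S.t (α (br a b)) (α (br a a)) (α (br b a)) = α (br b b)
    rw [← ht, hanti]
  · have key : ∀ x y z : A, α (br (α x) (α (br y z))) = α (α (br x (br y z))) := by
      intro x y z; rw [← hmult]
    show S.t (S.t (α (br (α a) (α (br b c)))) (α (br (α a) (α (br a a))))
        (α (br (α b) (α (br c a))))) (α (br (α b) (α (br b b))))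
        (α (br (α c) (α (br a b)))) = α (br (α c) (α (br c c)))
    rw [key, key, key, key, key, key, ← ht, ← ht, ← ht, ← ht]
    have := hjac a b c
    simp only [id] at this
    rw [this]
end

section
/- Let (A, {-,-}, α) be a Hom-Lie affgebra and o ∈ A with α(o) = o. Then the tangent vector space T_o A (with a + b = ⟨a,o,b⟩, ξa = ξ ▶_o a), equipped with the linear map a ↦ α(a) and the bracket [a,b]_o = {a,b} - {a,o} + {o,o} - {o,b}, is a Hom-Lie algebra: [-,-]_o is bilinear, anti-symmetric ([a,a]_o = 0), and satisfies the Hom-Jacobi identity [α(a),[b,c]_o]_o + [α(b),[c,a]_o]_o + [α(c),[a,b]_o]_o = 0. -/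
/-- The tangent abelian group structure of an affine space at a point `o`. -/
private def AffSp.grp {K A : Type*} [Field K] (S : AffSp K A) (o : A) : AddCommGroup A :=
  letI : Zero A := ⟨o⟩
  letI : Add A := ⟨fun a b => S.t a o b⟩
  letI : Neg A := ⟨fun a => S.t o a o⟩
  { add := (· + ·)
    zero := 0
    neg := (- ·)
    add_assoc := fun a b c => S.t_assoc a o b o c
    zero_add := fun a => S.t_malL o a
    add_zero := fun a => S.t_malR a o
    add_comm := fun a b => S.t_comm a o b
    neg_add_cancel := fun a => by
      show S.t (S.t o a o) o a = o
      rw [S.t_assoc, S.t_malL, S.t_malR]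
    nsmul := nsmulRec
    zsmul := zsmulRec }

/-- the fiber of a Hom-Lie affgebra at a fixed point o of α is a
Hom-Lie algebra, with bracket [a,b]_o = {a,b} - {a,o} + {o,o} - {o,b}. -/
theorem stmt_10 {K A : Type*} [Field K] (S : AffSp K A) (br : A → A → A) (α : A → A)
    (hbr : S.IsBiAffine br) (hα : S.IsAffineMap α)
    (hanti : S.AntiSym br) (hjac : S.HomJacobi br α)
    (o : A) (ho : α o = o) :
    -- the tangent space structure at o
    let add : A → A → A := fun a b => S.t a o b
    let neg : A → A := fun a => S.t o a o
    let sub : A → A → A := fun a b => add a (neg b)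
    let smul : K → A → A := fun ξ a => S.act ξ o a
    let lb : A → A → A :=
      fun a b => sub (add (sub (br a b) (br a o)) (br o o)) (br o b)
    -- α is linear on T_o A
    (∀ a b, α (add a b) = add (α a) (α b)) ∧
    (∀ (ξ : K) (a : A), α (smul ξ a) = smul ξ (α a)) ∧
    -- the bracket is bilinear
    (∀ a b c, lb (add a b) c = add (lb a c) (lb b c)) ∧
    (∀ (ξ : K) (a b : A), lb (smul ξ a) b = smul ξ (lb a b)) ∧
    (∀ a b c, lb a (add b c) = add (lb a b) (lb a c)) ∧
    (∀ (ξ : K) (a b : A), lb a (smul ξ b) = smul ξ (lb a b)) ∧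
    -- anti-symmetry
    (∀ a, lb a a = o) ∧
    -- Hom-Jacobi identity
    (∀ a b c,
      add (add (lb (α a) (lb b c)) (lb (α b) (lb c a))) (lb (α c) (lb a b)) = o) := by
  intro add neg sub smul lb
  letI : AddCommGroup A := S.grp o
  have hoz : o = (0 : A) := rfl
  have hadd : ∀ x y : A, add x y = x + y := fun _ _ => rfl
  have hsm : ∀ (ξ : K) (x : A), smul ξ x = S.act ξ o x := fun _ _ => rfl
  have h1 : ∀ x y : A, x - y = S.t x y o := by
    intro x y
    show S.t x o (S.t o y o) = S.t x y o
    rw [← S.t_assoc, S.t_malR]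
  have ht : ∀ x y z : A, S.t x y z = x - y + z := by
    intro x y z
    rw [h1]
    show S.t x y z = S.t (S.t x y o) o z
    rw [S.t_assoc, S.t_malL]
  have hlb : ∀ x y : A, lb x y = br x y - br x o + br o o - br o y := fun _ _ => rfl
  have hso : ∀ ξ : K, S.act ξ o o = o := by
    intro ξ
    have h := S.act_base ξ o o o
    rwa [S.t_malL] at h
  have hactb : ∀ (ξ : K) (x y : A), S.act ξ x y = S.act ξ o y - S.act ξ o x + x := by
    intro ξ x y
    rw [← ht]; exact S.act_base ξ x y o
  have hsadd : ∀ (ξ : K) (x y : A), S.act ξ o (x + y) = S.act ξ o x + S.act ξ o y := by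
    intro ξ x y
    show S.act ξ o (S.t x o y) = _
    rw [S.act_heap, hso]
    rfl
  have hsneg : ∀ (ξ : K) (x : A), S.act ξ o (-x) = -(S.act ξ o x) := by
    intro ξ x
    show S.act ξ o (S.t o x o) = _
    rw [S.act_heap, hso]
    rfl
  have hssub : ∀ (ξ : K) (x y : A), S.act ξ o (x - y) = S.act ξ o x - S.act ξ o y := by
    intro ξ x y
    rw [sub_eq_add_neg, hsadd, hsneg, ← sub_eq_add_neg]
  obtain ⟨hb1, hb2, hb3, hb4⟩ := hbr
  have hLadd : ∀ x y d : A, br (x + y) d = br x d + br y d - br o d := by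
    intro x y d
    show br (S.t x o y) d = _
    rw [hb1, ht]; abel
  have hRadd : ∀ d x y : A, br d (x + y) = br d x + br d y - br d o := by
    intro d x y
    show br d (S.t x o y) = _
    rw [hb3, ht]; abel
  have hRneg : ∀ d x : A, br d (-x) = br d o - br d x + br d o := by
    intro d x
    show br d (S.t o x o) = _
    rw [hb3, ht]
  have hRsub : ∀ d x y : A, br d (x - y) = br d x - br d y + br d o := by
    intro d x y
    rw [sub_eq_add_neg, hRadd, hRneg]; abel
  have hAS : ∀ x y : A, br x y - br x x + br y x = br y y := by
    intro x y
    have h := hanti x y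
    rwa [ht] at h
  have hdiag : ∀ x : A, br x x = br x o + br o x - br o o := by
    intro x
    have h := hAS x o
    rw [← h]; abel
  have hJ : ∀ x y z : A,
      br (α x) (br y z) - br (α x) (br x x) + br (α y) (br z x) - br (α y) (br y y)
        + br (α z) (br x y) = br (α z) (br z z) := by
    intro x y z
    have h := hjac x y z
    simpa only [ht] using h
  refine ⟨?_, ?_, ?_, ?_, ?_, ?_, ?_, ?_⟩
  · intro a b
    show α (S.t a o b) = S.t (α a) o (α b)
    rw [hα.1, ho]
  · intro ξ a
    show α (S.act ξ o a) = S.act ξ o (α a)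
    rw [hα.2, ho]
  · intro a b c
    simp only [hadd, hlb, hLadd]
    abel
  · intro ξ a b
    simp only [hsm, hlb]
    rw [hb2, hb2]
    rw [hactb ξ (br o b) (br a b), hactb ξ (br o o) (br a o)]
    rw [hssub, hsadd, hssub]
    abel
  · intro a b c
    simp only [hadd, hlb, hRadd]
    abel
  · intro ξ a b
    simp only [hsm, hlb]
    rw [hb4, hb4]
    rw [hactb ξ (br a o) (br a b), hactb ξ (br o o) (br o b)]
    rw [hssub, hsadd, hssub]
    abel
  · intro a
    rw [hlb a a]
    have h := hAS a o
    rw [← h, hoz]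
    abel
  · intro a b c
    have e1 := hJ a a o
    have e2 := hJ a b c
    have e3 := hJ a b o
    have e4 := hJ a o c
    have e5 := hJ b b o
    have e6 := hJ b c o
    have e7 := hJ c c o
    rw [ho] at e1 e3 e4 e5 e6 e7
    rw [hdiag a] at e1 e2 e3 e4
    rw [hdiag b] at e2 e3 e5 e6
    rw [hdiag c] at e2 e4 e6 e7
    simp only [hRadd, hRsub] at e1 e2 e3 e4 e5 e6 e7
    simp only [hadd, hlb, hRadd, hRsub]
    conv_rhs => rw [hoz]
    have E := congrArg₂ (HAdd.hAdd : A → A → A)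
      (congrArg₂ (HSub.hSub : A → A → A)
        (congrArg₂ (HAdd.hAdd : A → A → A)
          (congrArg₂ (HSub.hSub : A → A → A)
            (congrArg₂ (HSub.hSub : A → A → A)
              (congrArg₂ (HAdd.hAdd : A → A → A) e1 e2) e3) e4) e5) e6) e7
    rw [← sub_eq_zero] at E
    rw [← E]
    abel
end

section
/- Let (A, {-,-}, α) be a Hom-Lie affgebra and o, e ∈ A with α(o) = o and α(e) = e. Then the translation map τ_o^e : a ↦ ⟨a,o,e⟩ is an isomorphism of Hom-Lie algebras from (T_o A, [-,-]_o, α) to (T_e A, [-,-]_e, α), where [a,b]_o = {a,b} - {a,o} + {o,o} - {o,b} (differences taken in T_o A's additive structure) and similarly for [-,-]_e. -/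
/-- for fixed points o, e of α, the translation τ_o^e : a ↦ ⟨a,o,e⟩
is an isomorphism of the fiber Hom-Lie algebras (T_o A, [-,-]_o, α) ≅ (T_e A, [-,-]_e, α). -/
theorem stmt_11 {K A : Type*} [Field K] (S : AffSp K A) (br : A → A → A) (α : A → A)
    (hbr : S.IsBiAffine br) (hα : S.IsAffineMap α)
    (hanti : S.AntiSym br) (hjac : S.HomJacobi br α)
    (o e : A) (ho : α o = o) (he : α e = e) :
    let addo : A → A → A := fun a b => S.t a o b
    let subo : A → A → A := fun a b => S.t a b o
    let smulo : K → A → A := fun ξ a => S.act ξ o a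
    let lbo : A → A → A :=
      fun a b => subo (addo (subo (br a b) (br a o)) (br o o)) (br o b)
    let adde : A → A → A := fun a b => S.t a e b
    let sube : A → A → A := fun a b => S.t a b e
    let smule : K → A → A := fun ξ a => S.act ξ e a
    let lbe : A → A → A :=
      fun a b => sube (adde (sube (br a b) (br a e)) (br e e)) (br e b)
    let τ : A → A := fun a => S.t a o e
    Function.Bijective τ ∧
    (∀ a b, τ (addo a b) = adde (τ a) (τ b)) ∧
    (∀ (ξ : K) (a : A), τ (smulo ξ a) = smule ξ (τ a)) ∧
    (∀ a b, τ (lbo a b) = lbe (τ a) (τ b)) ∧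
    (∀ a, τ (α a) = α (τ a)) := by
  intro addo subo smulo lbo adde sube smule lbe τ
  letI : Zero A := ⟨o⟩
  letI : Add A := ⟨fun a b => S.t a o b⟩
  letI : Neg A := ⟨fun a => S.t o a o⟩
  letI : AddCommGroup A :=
    { add := (· + ·)
      add_assoc := fun a b c => S.t_assoc a o b o c
      zero := 0
      zero_add := fun b => S.t_malL o b
      add_zero := fun a => S.t_malR a o
      nsmul := nsmulRec
      zsmul := zsmulRec
      neg := Neg.neg
      neg_add_cancel := fun a => by
        show S.t (S.t o a o) o a = o
        rw [S.t_assoc o a o o a, S.t_malL o a, S.t_malR o a]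
      add_comm := fun a b => S.t_comm a o b }
  have ht : ∀ x y z : A, S.t x y z = x - y + z := by
    intro x y z
    rw [sub_eq_add_neg]
    show S.t x y z = S.t (S.t x o (S.t o y o)) o z
    rw [← S.t_assoc x o o y o, S.t_malR x o, S.t_assoc x y o o z, S.t_malL o z]
  have h1 := hbr.1
  have h3 := hbr.2.2.1
  have hee : ∀ ξ : K, S.act ξ e e = e := by
    intro ξ
    rw [S.act_base ξ e e e, S.t_malL]
  refine ⟨?_, ?_, ?_, ?_, ?_⟩
  · refine Function.bijective_iff_has_inverse.mpr ⟨fun a => S.t a e o, ?_, ?_⟩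
    · intro a
      show S.t (S.t a o e) e o = a
      rw [S.t_assoc a o e e o, S.t_malL e o, S.t_malR a o]
    · intro a
      show S.t (S.t a e o) o e = a
      rw [S.t_assoc a e o o e, S.t_malL o e, S.t_malR a e]
  · intro a b
    simp only [addo, adde, τ, ht]
    abel
  · intro ξ a
    simp only [smulo, smule, τ]
    rw [S.act_base ξ o a e, S.act_heap ξ e a o e, hee, ht, ht, ht]
    abel
  · intro a b
    simp only [lbo, lbe, addo, adde, subo, sube, τ]
    simp only [h1, h3]
    simp only [ht]
    abel
  · intro a
    simp only [τ]
    rw [hα.1 a o e, ho, he]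
end

section
/- Let (A, •, α) be a Hom-associative affgebra and o ∈ A with α(o) = o. Then T_o A with the multiplication a •_o b = a•b - a•o + o•o - o•b + o (operations taken in the vector space T_o A) and the linear map a ↦ α(a) is a Hom-associative algebra: •_o is bilinear and α(a) •_o (b •_o c) = (a •_o b) •_o α(c) for all a,b,c. -/
/-- the fiber of a Hom-associative affgebra at a fixed point o of α is
a Hom-associative algebra, with a •_o b = a•b - a•o + o•o - o•b + o. -/
theorem stmt_12 {K A : Type*} [Field K] (S : AffSp K A) (mul : A → A → A) (α : A → A)
    (hmul : S.IsBiAffine mul) (hα : S.IsAffineMap α)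
    (hassoc : ∀ a b c, mul (α a) (mul b c) = mul (mul a b) (α c))
    (hmult : ∀ a b, α (mul a b) = mul (α a) (α b))
    (o : A) (ho : α o = o) :
    let add : A → A → A := fun a b => S.t a o b
    let sub : A → A → A := fun a b => S.t a b o
    let smul : K → A → A := fun ξ a => S.act ξ o a
    let mulo : A → A → A :=
      fun a b => add (sub (add (sub (mul a b) (mul a o)) (mul o o)) (mul o b)) o
    -- α is linear on T_o A
    (∀ a b, α (add a b) = add (α a) (α b)) ∧
    (∀ (ξ : K) (a : A), α (smul ξ a) = smul ξ (α a)) ∧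
    -- the multiplication is bilinear
    (∀ a b c, mulo (add a b) c = add (mulo a c) (mulo b c)) ∧
    (∀ (ξ : K) (a b : A), mulo (smul ξ a) b = smul ξ (mulo a b)) ∧
    (∀ a b c, mulo a (add b c) = add (mulo a b) (mulo a c)) ∧
    (∀ (ξ : K) (a b : A), mulo a (smul ξ b) = smul ξ (mulo a b)) ∧
    -- Hom-associativity
    (∀ a b c, mulo (α a) (mulo b c) = mulo (mulo a b) (α c)) := by

  -- Set up an additive group structure on `A` with zero `o`.
  letI : Zero A := ⟨o⟩
  letI : Add A := ⟨fun a b => S.t a o b⟩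
  letI : Neg A := ⟨fun a => S.t o a o⟩
  letI : AddCommGroup A := {
    add := (· + ·)
    zero := 0
    neg := Neg.neg
    add_assoc := fun a b c => S.t_assoc a o b o c
    zero_add := fun a => S.t_malL o a
    add_zero := fun a => S.t_malR a o
    add_comm := fun a b => S.t_comm a o b
    neg_add_cancel := fun a => by
      show S.t (S.t o a o) o a = o
      rw [S.t_assoc, S.t_malL, S.t_malR]
    nsmul := nsmulRec
    zsmul := zsmulRec }
  have hso : ∀ ξ : K, S.act ξ o o = o := by
    intro ξ
    rw [S.act_base ξ o o o, S.t_malL]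
  letI : SMul K A := ⟨fun ξ a => S.act ξ o a⟩
  letI : Module K A := {
    one_smul := fun a => S.act_one o a
    mul_smul := fun ξ ζ a => S.act_mul ξ ζ o a
    smul_zero := fun ξ => hso ξ
    smul_add := fun ξ a b => by
      show S.act ξ o (S.t a o b) = S.t (S.act ξ o a) o (S.act ξ o b)
      rw [S.act_heap, hso]
    add_smul := fun ξ ζ a => by
      show S.act (ξ + ζ) o a = S.t (S.act ξ o a) o (S.act ζ o a)
      have h : ξ + ζ = ξ - 0 + ζ := by ring
      rw [h, S.act_heapK, S.act_zero]
    zero_smul := fun a => S.act_zero o a }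
  have ht : ∀ a b c : A, S.t a b c = a - b + c := by
    intro a b c
    rw [sub_eq_add_neg]
    show S.t a b c = S.t (S.t a o (S.t o b o)) o c
    rw [S.t_assoc a o, S.t_assoc o b, S.t_malL, ← S.t_assoc, S.t_malR]
  have hact : ∀ (ξ : K) (a b : A), S.act ξ a b = ξ • b - ξ • a + a := by
    intro ξ a b
    rw [S.act_base ξ a b o, ht]
    rfl
  have hsoo : ∀ ξ : K, ξ • o = (o : A) := hso
  have ho0 : o = (0 : A) := rfl
  intro add sub smul mulo
  obtain ⟨hm1, hm2, hm3, hm4⟩ := hmul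
  obtain ⟨ha1, ha2⟩ := hα
  have hadd : ∀ a b : A, add a b = a + b := fun _ _ => rfl
  have hsm : ∀ (ξ : K) (a : A), smul ξ a = ξ • a := fun _ _ => rfl
  have hmulo : ∀ x y : A,
      mulo x y = mul x y - mul x o + mul o o - mul o y + o := by
    intro x y
    simp only [mulo, add, sub, ht]
    abel
  have hL : ∀ a b c d : A, mul (a - b + c) d = mul a d - mul b d + mul c d := by
    intro a b c d
    rw [← ht, hm1, ht]
  have hR : ∀ a b c d : A, mul d (a - b + c) = mul d a - mul d b + mul d c := by
    intro a b c d
    rw [← ht, hm3, ht]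
  have hLa : ∀ a b d : A, mul (a + b) d = mul a d - mul o d + mul b d := by
    intro a b d
    have h : mul (a + b) d = S.t (mul a d) (mul o d) (mul b d) := hm1 a o b d
    rw [h, ht]
  have hRa : ∀ a b d : A, mul d (a + b) = mul d a - mul d o + mul d b := by
    intro a b d
    have h : mul d (a + b) = S.t (mul d a) (mul d o) (mul d b) := hm3 a o b d
    rw [h, ht]
  have hLs : ∀ (ξ : K) (b d : A),
      mul (ξ • b) d = ξ • mul b d - ξ • mul o d + mul o d := by
    intro ξ b d
    have h : mul (ξ • b) d = S.act ξ (mul o d) (mul b d) := hm2 ξ o b d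
    rw [h, hact]
  have hRs : ∀ (ξ : K) (b d : A),
      mul d (ξ • b) = ξ • mul d b - ξ • mul d o + mul d o := by
    intro ξ b d
    have h : mul d (ξ • b) = S.act ξ (mul d o) (mul d b) := hm4 ξ o b d
    rw [h, hact]
  refine ⟨?_, ?_, ?_, ?_, ?_, ?_, ?_⟩
  · intro a b
    show α (S.t a o b) = S.t (α a) o (α b)
    rw [ha1, ho]
  · intro ξ a
    show α (S.act ξ o a) = S.act ξ o (α a)
    rw [ha2, ho]
  · intro a b c
    simp only [hmulo, hadd, hLa]
    simp only [ho0]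
    abel
  · intro ξ a b
    simp only [hmulo, hsm, hLs]
    simp only [ho0, smul_add, smul_sub, smul_zero]
    abel
  · intro a b c
    simp only [hmulo, hadd, hRa]
    simp only [ho0]
    abel
  · intro ξ a b
    simp only [hmulo, hsm, hRs]
    simp only [ho0, smul_add, smul_sub, smul_zero]
    abel
  · intro a b c
    have e1 := hassoc a b c
    have e2 : mul (α a) (mul b o) = mul (mul a b) o := by
      have h := hassoc a b o; rwa [ho] at h
    have e3 := hassoc a o c
    have e4 : mul (α a) (mul o o) = mul (mul a o) o := by
      have h := hassoc a o o; rwa [ho] at h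
    have e5 : mul o (mul b c) = mul (mul o b) (α c) := by
      have h := hassoc o b c; rwa [ho] at h
    have e6 : mul o (mul b o) = mul (mul o b) o := by
      have h := hassoc o b o; rwa [ho] at h
    have e7 : mul o (mul o c) = mul (mul o o) (α c) := by
      have h := hassoc o o c; rwa [ho] at h
    have e8 : mul o (mul o o) = mul (mul o o) o := by
      have h := hassoc o o o; rwa [ho] at h
    simp only [hmulo]
    simp only [hL, hR]
    simp only [e1, e2, e3, e4, e5, e6, e7, e8]
    simp only [ho0]
    abel
end

section
/- Let (L, [-,-], α) be a Hom-Lie algebra over a field of characteristic ≠ 2, and let κ, λ be linear endomorphisms of L with λα = αλ, κα = ακ, satisfying λ([a,b]) = [λ(a),α(b)] - [α(a),κ(b)] + [α(a),λ(b)] for all a,b. Then, for any r ∈ L, the bracket {a,b} = [a,b] + κ(a) + λ(b - a) + r (on L with affine structure ⟨a,b,c⟩ = a - b + c, ξ ▶_a b = ξb + (1-ξ)a) satisfies affine anti-symmetry and the affine Hom-Jacobi identity, so it defines a Hom-Lie affgebra. -/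
/-- given a Hom-Lie algebra L and linear endomorphisms κ, λ commuting
with α and satisfying λ([a,b]) = [λ(a),α(b)] - [α(a),κ(b)] + [α(a),λ(b)], for any r ∈ L
the bracket {a,b} = [a,b] + κ(a) + λ(b-a) + r satisfies affine anti-symmetry and the
affine Hom-Jacobi identity, hence defines a Hom-Lie affgebra. -/
theorem stmt_14 {K L : Type*} [Field K] [AddCommGroup L] [Module K L]
    (h2 : (2 : K) ≠ 0)
    (lb : L →ₗ[K] L →ₗ[K] L) (α : L →ₗ[K] L)
    (hanti : ∀ a b, lb a b = - lb b a)
    (hjac : ∀ a b c, lb (α a) (lb b c) + lb (α b) (lb c a) + lb (α c) (lb a b) = 0)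
    (κ lam : L →ₗ[K] L)
    (hκα : ∀ a, κ (α a) = α (κ a))
    (hlama : ∀ a, lam (α a) = α (lam a))
    (hcompat : ∀ a b, lam (lb a b) = lb (lam a) (α b) - lb (α a) (κ b) + lb (α a) (lam b))
    (r : L) :
    let br : L → L → L := fun a b => lb a b + κ a + lam (b - a) + r
    -- affine anti-symmetry
    (∀ a b : L, br a b - br a a + br b a = br b b) ∧
    -- affine Hom-Jacobi identity
    (∀ a b c : L,
      br (α a) (br b c) - br (α a) (br a a) + br (α b) (br c a)
        - br (α b) (br b b) + br (α c) (br a b) = br (α c) (br c c)) := by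
  intro br
  have h0 : ∀ a, lb a a = 0 := by
    intro a
    have h : (2 : K) • lb a a = 0 := by
      rw [two_smul]
      nth_rewrite 1 [hanti a a]
      exact neg_add_cancel _
    rcases smul_eq_zero.mp h with h' | h'
    · exact absurd h' h2
    · exact h'
  have hk : ∀ a, lb (α a) (κ a) = 0 := by
    intro a
    have h := hcompat a a
    rw [h0, map_zero, hanti (lam a) (α a)] at h
    have h' : (0 : L) = - lb (α a) (κ a) := by rw [h]; abel
    rw [← neg_eq_zero, ← h']
  constructor
  · intro a b
    simp only [br, h0, map_sub, sub_self, map_zero]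
    rw [hanti a b]
    abel
  · intro a b c
    have hZ : lb (α c) (lb a b) = -(lb (α a) (lb b c) + lb (α b) (lb c a)) :=
      eq_neg_of_add_eq_zero_right (hjac a b c)
    simp only [br, h0, map_sub, map_add, sub_self, map_zero, zero_add, add_zero,
      LinearMap.add_apply, LinearMap.sub_apply, LinearMap.zero_apply]
    rw [hcompat b c, hcompat c a, hcompat a b, hanti (lam b) (α c), hanti (lam c) (α a),
      hanti (lam a) (α b), hZ]
    simp only [hk]
    abel
end

section
/- Let L be a Hom-Lie algebra over a field of characteristic ≠ 2, with affine structure ⟨a,b,c⟩ = a - b + c. Suppose κ, λ are linear endomorphisms commuting with α and r ∈ L, and suppose the bracket {a,b} = [a,b] + κ(a) + λ(b-a) + r satisfies the affine Hom-Jacobi identity {α(a),{b,c}} - {α(a),{a,a}} + {α(b),{c,a}} - {α(b),{b,b}} + {α(c),{a,b}} = {α(c),{c,c}} for all a,b,c ∈ L. Then [α(a), κ(a)] = 0 for all a ∈ L, and λ([a,b]) = [λ(a),α(b)] - [α(a),κ(b)] + [α(a),λ(b)] for all a,b ∈ L. -/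
/-!
Write `{a,b} = [a,b] + κ(a) + λ(b-a) + r`. For fixed `x` the map `y ↦ {x,y}` is affine with
linear part `[x,-] + λ`, so each of the three differences such as `{α(a),{b,c}} - {α(a),{a,a}}` in the
affine Hom-Jacobi identity is linear in `{b,c} - {a,a}`. Taking `c = 0`, the identity collapses to
`λ[a,b] + [α(a), κ(b) - λ(b) - κ(a)] + [α(b), λ(a) - κ(b)] = 0`; the case `b = a` gives
`[α(a), κ(a)] = 0`, and feeding this back gives the formula for `λ[a,b]`.
-/

theorem eq_zero_of_eq_neg_of_two_ne_zero {K L : Type*} [DivisionRing K] [AddCommGroup L]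
    [Module K L] (h2 : (2 : K) ≠ 0) {v : L} (h : v = -v) : v = 0 := by
  have h2v : (2 : K) • v = 0 := by
    rw [two_smul]
    nth_rewrite 1 [h]
    exact neg_add_cancel v
  exact (smul_eq_zero.mp h2v).resolve_left h2

namespace AffineHomLie

variable {K L : Type*} [CommRing K] [AddCommGroup L] [Module K L]
  (lb : L →ₗ[K] L →ₗ[K] L) (κ lam : L →ₗ[K] L) (r : L)

def bracket (a b : L) : L := lb a b + κ a + lam (b - a) + r

theorem bracket_sub_bracket (x y z : L) :
    bracket lb κ lam r x y - bracket lb κ lam r x z = lb x (y - z) + lam (y - z) := by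
  simp only [bracket, map_sub]
  abel

variable {lb}

theorem homJacobiator_at_zero (halt : ∀ a, lb a a = 0) (α : L →ₗ[K] L) (a b : L) :
    let br := bracket lb κ lam r
    br (α a) (br b 0) - br (α a) (br a a) + br (α b) (br 0 a) - br (α b) (br b b)
        + br (α 0) (br a b) - br (α 0) (br 0 0)
      = lam (lb a b) + lb (α a) (κ b - lam b - κ a) + lb (α b) (lam a - κ b) := by
  intro br
  have hsplit : br (α a) (br b 0) - br (α a) (br a a) + br (α b) (br 0 a) - br (α b) (br b b)
        + br (α 0) (br a b) - br (α 0) (br 0 0)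
      = (br (α a) (br b 0) - br (α a) (br a a)) + (br (α b) (br 0 a) - br (α b) (br b b))
        + (br (α 0) (br a b) - br (α 0) (br 0 0)) := by abel
  rw [hsplit, bracket_sub_bracket, bracket_sub_bracket, bracket_sub_bracket]
  simp only [br, bracket, halt, map_zero, map_sub, map_add, LinearMap.zero_apply]
  abel

end AffineHomLie

open AffineHomLie in
theorem stmt_15_general {K L : Type*} [Field K] [AddCommGroup L] [Module K L]
    (h2 : (2 : K) ≠ 0)
    (lb : L →ₗ[K] L →ₗ[K] L) (α : L →ₗ[K] L)
    (hanti : ∀ a b, lb a b = - lb b a)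
    (κ lam : L →ₗ[K] L)
    (r : L)
    (br : L → L → L)
    (hbr : ∀ a b, br a b = lb a b + κ a + lam (b - a) + r)
    (hHomJac : ∀ a b c : L,
      br (α a) (br b c) - br (α a) (br a a) + br (α b) (br c a)
        - br (α b) (br b b) + br (α c) (br a b) = br (α c) (br c c)) :
    (∀ a : L, lb (α a) (κ a) = 0) ∧
    (∀ a b : L,
      lam (lb a b) = lb (lam a) (α b) - lb (α a) (κ b) + lb (α a) (lam b)) := by
  have halt : ∀ a, lb a a = 0 := fun a => eq_zero_of_eq_neg_of_two_ne_zero h2 (hanti a a)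
  obtain rfl : br = bracket lb κ lam r := funext fun a => funext (hbr a)
  have hlin : ∀ a b,
      lam (lb a b) + lb (α a) (κ b - lam b - κ a) + lb (α b) (lam a - κ b) = 0 := fun a b => by
    rw [← homJacobiator_at_zero κ lam r halt α a b]
    exact sub_eq_zero_of_eq (hHomJac a b 0)
  have hκ : ∀ a, lb (α a) (κ a) = 0 := fun a => by
    have h := hlin a a
    simp only [halt, map_zero, map_sub, zero_add] at h
    rw [← neg_eq_zero, ← h]
    abel
  refine ⟨hκ, fun a b => ?_⟩
  have h := hlin a b
  rw [hanti (lam a) (α b), ← sub_eq_zero, ← h]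
  simp only [map_sub, hκ]
  abel

/-- conversely, if {a,b} = [a,b] + κ(a) + λ(b-a) + r satisfies the affine
Hom-Jacobi identity, then [α(a),κ(a)] = 0 and
λ([a,b]) = [λ(a),α(b)] - [α(a),κ(b)] + [α(a),λ(b)]. -/
theorem stmt_15 {K L : Type*} [Field K] [AddCommGroup L] [Module K L]
    (h2 : (2 : K) ≠ 0)
    (lb : L →ₗ[K] L →ₗ[K] L) (α : L →ₗ[K] L)
    (hanti : ∀ a b, lb a b = - lb b a)
    (hjac : ∀ a b c, lb (α a) (lb b c) + lb (α b) (lb c a) + lb (α c) (lb a b) = 0)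
    (κ lam : L →ₗ[K] L)
    (hκα : ∀ a, κ (α a) = α (κ a))
    (hlama : ∀ a, lam (α a) = α (lam a))
    (r : L)
    (br : L → L → L)
    (hbr : ∀ a b, br a b = lb a b + κ a + lam (b - a) + r)
    (hHomJac : ∀ a b c : L,
      br (α a) (br b c) - br (α a) (br a a) + br (α b) (br c a)
        - br (α b) (br b b) + br (α c) (br a b) = br (α c) (br c c)) :
    (∀ a : L, lb (α a) (κ a) = 0) ∧
    (∀ a b : L,
      lam (lb a b) = lb (lam a) (α b) - lb (α a) (κ b) + lb (α a) (lam b)) :=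
  stmt_15_general h2 lb α hanti κ lam r br hbr hHomJac
end

section
/- Let L, L' be Hom-Lie algebras (with twist maps α, α') over a field of characteristic ≠ 2, with data (κ, λ, r) and (κ', λ', r') satisfying the compatibility condition λ([a,b]) = [λ(a),α(b)] - [α(a),κ(b)] + [α(a),λ(b)] (and its primed analogue), defining Hom-Lie affgebras A(L;α,κ,λ,r) and A(L';α',κ',λ',r') with brackets {a,b} = [a,b] + κ(a) + λ(b-a) + r. Suppose ψ : L → L' is a Hom-Lie algebra homomorphism and q' ∈ L' satisfy: q' = α'(q'), ψκ = κ'ψ, ψλ = (ad_{q'} + λ')ψ, and ψ(r) = r' - q' + κ'(q'). Then the affine map φ : a ↦ ψ(a) + q' is a homomorphism of Hom-Lie affgebras: φ ∘ α = α' ∘ φ and φ({a,b}) = {φ(a), φ(b)}' for all a,b ∈ L. -/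
/-- given Hom-Lie affgebras A(L;α,κ,λ,r) and A(L';α',κ',λ',r') with
brackets {a,b} = [a,b] + κ(a) + λ(b-a) + r, a Hom-Lie algebra homomorphism ψ : L → L'
and q' ∈ L' satisfying q' = α'(q'), ψκ = κ'ψ, ψλ = (ad_{q'} + λ')ψ and
ψ(r) = r' - q' + κ'(q') give a homomorphism of Hom-Lie affgebras φ : a ↦ ψ(a) + q'. -/
theorem stmt_18 {K L L' : Type*} [Field K]
    [AddCommGroup L] [Module K L] [AddCommGroup L'] [Module K L']
    (h2 : (2 : K) ≠ 0)
    (lb : L →ₗ[K] L →ₗ[K] L) (α : L →ₗ[K] L)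
    (hanti : ∀ a b, lb a b = - lb b a)
    (hjac : ∀ a b c, lb (α a) (lb b c) + lb (α b) (lb c a) + lb (α c) (lb a b) = 0)
    (lb' : L' →ₗ[K] L' →ₗ[K] L') (α' : L' →ₗ[K] L')
    (hanti' : ∀ a b, lb' a b = - lb' b a)
    (hjac' : ∀ a b c,
      lb' (α' a) (lb' b c) + lb' (α' b) (lb' c a) + lb' (α' c) (lb' a b) = 0)
    (κ lam : L →ₗ[K] L) (r : L)
    (hκα : ∀ a, κ (α a) = α (κ a)) (hlama : ∀ a, lam (α a) = α (lam a))
    (hcompat : ∀ a b,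
      lam (lb a b) = lb (lam a) (α b) - lb (α a) (κ b) + lb (α a) (lam b))
    (κ' lam' : L' →ₗ[K] L') (r' : L')
    (hκα' : ∀ a, κ' (α' a) = α' (κ' a)) (hlama' : ∀ a, lam' (α' a) = α' (lam' a))
    (hcompat' : ∀ a b,
      lam' (lb' a b) = lb' (lam' a) (α' b) - lb' (α' a) (κ' b) + lb' (α' a) (lam' b))
    (ψ : L →ₗ[K] L')
    (hψlb : ∀ a b, ψ (lb a b) = lb' (ψ a) (ψ b))
    (hψα : ∀ a, ψ (α a) = α' (ψ a))
    (q' : L')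
    (hq1 : q' = α' q')
    (hq2 : ∀ a, ψ (κ a) = κ' (ψ a))
    (hq3 : ∀ a, ψ (lam a) = lb' q' (ψ a) + lam' (ψ a))
    (hq4 : ψ r = r' - q' + κ' q') :
    let br : L → L → L := fun a b => lb a b + κ a + lam (b - a) + r
    let br' : L' → L' → L' := fun a b => lb' a b + κ' a + lam' (b - a) + r'
    let φ : L → L' := fun a => ψ a + q'
    (∀ a, φ (α a) = α' (φ a)) ∧
    (∀ a b, φ (br a b) = br' (φ a) (φ b)) := by
  intro br br' φ
  have hq0 : lb' q' q' = 0 := by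
    have h := hanti' q' q'
    have h2' : (2:K) • lb' q' q' = 0 := by
      rw [two_smul]; linear_combination (norm := module) h
    simpa [smul_eq_zero, h2] using h2'
  constructor
  · intro a
    simp only [φ, hψα, map_add, ← hq1]
  · intro a b
    simp only [φ, br, br', map_add, hψlb, hq2, hq3, hq4, map_sub, LinearMap.add_apply]
    rw [hq0, hanti' (ψ a) q']
    abel
end

section
/- Let L, L' be Hom-Lie algebras over a field of characteristic ≠ 2 defining Hom-Lie affgebras A = A(L;α,κ,λ,r) and A' = A(L';α',κ',λ',r') with brackets {a,b} = [a,b] + κ(a) + λ(b-a) + r (and primed analogue), where κ, λ commute with α and satisfy λ([a,b]) = [λ(a),α(b)] - [α(a),κ(b)] + [α(a),λ(b)]. If φ : A → A' is a homomorphism of Hom-Lie affgebras (affine, φα = α'φ, φ{a,b} = {φ(a),φ(b)}'), then the linear map ψ(a) = φ(a) - φ(0) is a Hom-Lie algebra homomorphism L → L', and with q' = φ(0) the conditions q' = α'(q'), ψκ = κ'ψ, ψλ = (ad_{q'} + λ')ψ, and ψ(r) = r' - q' + κ'(q') hold. -/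
/-!
Write `φ = ψ + q'` with `ψ` linear. The bracket condition `φ {a, b} = {φ a, φ b}'` is then an
identity in `(a, b)` made of a bilinear part, parts linear in `a` or in `b` alone, and a constant
part; comparing its instances at `(a, b)`, `(a, 0)`, `(0, b)` and `(0, 0)` separates them and
yields, in turn, the bracket, `λ`, `κ` and `r` conditions. Only the `r` condition sees
`[q', q']'`, which vanishes because `2 ≠ 0`.
-/

section LinearPart

variable {K V W : Type*} [Ring K] [AddCommGroup V] [Module K V] [AddCommGroup W] [Module K W]
  {φ : V → W}

theorem map_add_sub_map_zero (hφ : ∀ a b c, φ (a - b + c) = φ a - φ b + φ c) (x y : V) :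
    φ (x + y) - φ 0 = (φ x - φ 0) + (φ y - φ 0) := by
  have h := hφ x 0 y
  rw [sub_zero] at h
  rw [h]; abel

theorem map_smul_sub_map_zero
    (hφ : ∀ (ξ : K) (a b : V), φ (ξ • b + (1 - ξ) • a) = ξ • φ b + (1 - ξ) • φ a)
    (ξ : K) (x : V) : φ (ξ • x) - φ 0 = ξ • (φ x - φ 0) := by
  have h := hφ ξ 0 x
  rw [smul_zero, add_zero] at h
  rw [h, sub_smul, one_smul, smul_sub]; abel

def linearPart (hadd : ∀ a b c, φ (a - b + c) = φ a - φ b + φ c)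
    (hsmul : ∀ (ξ : K) (a b : V), φ (ξ • b + (1 - ξ) • a) = ξ • φ b + (1 - ξ) • φ a) :
    V →ₗ[K] W where
  toFun x := φ x - φ 0
  map_add' := map_add_sub_map_zero hadd
  map_smul' := map_smul_sub_map_zero hsmul

end LinearPart

theorem LinearMap.apply_self_eq_zero_of_antisymm {K M N : Type*} [Field K] [AddCommGroup M]
    [Module K M] [AddCommGroup N] [Module K N] (h2 : (2 : K) ≠ 0) {B : M →ₗ[K] M →ₗ[K] N}
    (hB : ∀ x y, B x y = - B y x) (x : M) : B x x = 0 := by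
  have h : (2 : K) • B x x = 0 := by
    rw [two_smul]
    nth_rewrite 1 [hB]
    exact neg_add_cancel _
  exact (smul_eq_zero.mp h).resolve_left h2

section AffBracket

variable {K L L' : Type*} [CommRing K] [AddCommGroup L] [Module K L] [AddCommGroup L']
  [Module K L']

def affBracket (lb : L →ₗ[K] L →ₗ[K] L) (κ lam : L →ₗ[K] L) (r : L) (a b : L) : L :=
  lb a b + κ a + lam (b - a) + r

variable {lb : L →ₗ[K] L →ₗ[K] L} {κ lam : L →ₗ[K] L} {r : L}
  {lb' : L' →ₗ[K] L' →ₗ[K] L'} {κ' lam' : L' →ₗ[K] L'} {r' : L'} {f : L →ₗ[K] L'} {q' : L'}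

theorem map_affBracket_expand
    (hf : ∀ a b,
      f (affBracket lb κ lam r a b) + q' = affBracket lb' κ' lam' r' (f a + q') (f b + q'))
    (a b : L) :
    f (lb a b) + f (κ a) + f (lam b) - f (lam a) + f r + q' =
      lb' (f a) (f b) + lb' (f a) q' + lb' q' (f b) + lb' q' q' + κ' (f a) + κ' q'
        + lam' (f b) - lam' (f a) + r' := by
  have h := hf a b
  simp only [affBracket, map_add, map_sub, LinearMap.add_apply, add_sub_add_right_eq_sub] at h
  linear_combination (norm := module) h

theorem map_lb_of_map_affBracket
    (hf : ∀ a b,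
      f (affBracket lb κ lam r a b) + q' = affBracket lb' κ' lam' r' (f a + q') (f b + q'))
    (a b : L) : f (lb a b) = lb' (f a) (f b) := by
  have hab := map_affBracket_expand hf a b
  have ha0 := map_affBracket_expand hf a 0
  have h0b := map_affBracket_expand hf 0 b
  have h00 := map_affBracket_expand hf 0 0
  simp only [map_zero, LinearMap.zero_apply] at ha0 h0b h00
  linear_combination (norm := module) hab - ha0 - h0b + h00

theorem map_lam_of_map_affBracket
    (hf : ∀ a b,
      f (affBracket lb κ lam r a b) + q' = affBracket lb' κ' lam' r' (f a + q') (f b + q'))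
    (a : L) : f (lam a) = lb' q' (f a) + lam' (f a) := by
  have h0a := map_affBracket_expand hf 0 a
  have h00 := map_affBracket_expand hf 0 0
  simp only [map_zero, LinearMap.zero_apply] at h0a h00
  linear_combination (norm := module) h0a - h00

theorem map_κ_of_map_affBracket (hanti' : ∀ x y, lb' x y = - lb' y x)
    (hf : ∀ a b,
      f (affBracket lb κ lam r a b) + q' = affBracket lb' κ' lam' r' (f a + q') (f b + q'))
    (a : L) : f (κ a) = κ' (f a) := by
  have ha0 := map_affBracket_expand hf a 0
  have h00 := map_affBracket_expand hf 0 0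
  simp only [map_zero, LinearMap.zero_apply] at ha0 h00
  linear_combination (norm := module) ha0 - h00 + map_lam_of_map_affBracket hf a + hanti' (f a) q'

theorem map_r_of_map_affBracket (hq' : lb' q' q' = 0)
    (hf : ∀ a b,
      f (affBracket lb κ lam r a b) + q' = affBracket lb' κ' lam' r' (f a + q') (f b + q')) :
    f r = r' - q' + κ' q' := by
  have h00 := map_affBracket_expand hf 0 0
  simp only [map_zero, LinearMap.zero_apply, hq'] at h00
  linear_combination (norm := module) h00

end AffBracket

theorem stmt_19_general {K L L' : Type*} [Field K]
    [AddCommGroup L] [Module K L] [AddCommGroup L'] [Module K L']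
    (h2 : (2 : K) ≠ 0)
    (lb : L →ₗ[K] L →ₗ[K] L) (α : L →ₗ[K] L)
    (lb' : L' →ₗ[K] L' →ₗ[K] L') (α' : L' →ₗ[K] L')
    (hanti' : ∀ a b, lb' a b = - lb' b a)
    (κ lam : L →ₗ[K] L) (r : L)
    (κ' lam' : L' →ₗ[K] L') (r' : L')
    (br : L → L → L) (hbr : ∀ a b, br a b = lb a b + κ a + lam (b - a) + r)
    (br' : L' → L' → L') (hbr' : ∀ a b, br' a b = lb' a b + κ' a + lam' (b - a) + r')
    (φ : L → L')
    -- φ is an affine map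
    (haff1 : ∀ a b c : L, φ (a - b + c) = φ a - φ b + φ c)
    (haff2 : ∀ (ξ : K) (a b : L),
      φ (ξ • b + (1 - ξ) • a) = ξ • φ b + (1 - ξ) • φ a)
    -- φ intertwines the twist maps and preserves the brackets
    (hφα : ∀ a, φ (α a) = α' (φ a))
    (hφbr : ∀ a b, φ (br a b) = br' (φ a) (φ b)) :
    let ψ : L → L' := fun a => φ a - φ 0
    let q' : L' := φ 0
    -- ψ is a Hom-Lie algebra homomorphism
    (∀ a b, ψ (a + b) = ψ a + ψ b) ∧
    (∀ (ξ : K) (a : L), ψ (ξ • a) = ξ • ψ a) ∧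
    (∀ a b, ψ (lb a b) = lb' (ψ a) (ψ b)) ∧
    (∀ a, ψ (α a) = α' (ψ a)) ∧
    -- the four compatibility conditions
    q' = α' q' ∧
    (∀ a, ψ (κ a) = κ' (ψ a)) ∧
    (∀ a, ψ (lam a) = lb' q' (ψ a) + lam' (ψ a)) ∧
    ψ r = r' - q' + κ' q' := by
  intro ψ q'
  obtain rfl : br = affBracket lb κ lam r := funext₂ hbr
  obtain rfl : br' = affBracket lb' κ' lam' r' := funext₂ hbr'
  let f := linearPart haff1 haff2
  have hφ : ∀ x, φ x = f x + q' := fun x => (sub_add_cancel _ _).symm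
  have hq' : q' = α' q' := by simpa using hφα 0
  have hf : ∀ a b,
      f (affBracket lb κ lam r a b) + q' = affBracket lb' κ' lam' r' (f a + q') (f b + q') := by
    intro a b
    simpa only [← hφ] using hφbr a b
  have hfα : ∀ a, f (α a) = α' (f a) := fun a => by
    change φ (α a) - q' = α' (φ a - q')
    rw [map_sub, hφα, ← hq']
  exact ⟨f.map_add, f.map_smul, map_lb_of_map_affBracket hf, hfα, hq',
    map_κ_of_map_affBracket hanti' hf, map_lam_of_map_affBracket hf,
    map_r_of_map_affBracket (LinearMap.apply_self_eq_zero_of_antisymm h2 hanti' q') hf⟩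

/-- conversely, a homomorphism of Hom-Lie affgebras
φ : A(L;α,κ,λ,r) → A(L';α',κ',λ',r') yields a Hom-Lie algebra homomorphism
ψ(a) = φ(a) - φ(0), and with q' = φ(0) the conditions q' = α'(q'), ψκ = κ'ψ,
ψλ = (ad_{q'} + λ')ψ and ψ(r) = r' - q' + κ'(q') hold. -/
theorem stmt_19 {K L L' : Type*} [Field K]
    [AddCommGroup L] [Module K L] [AddCommGroup L'] [Module K L']
    (h2 : (2 : K) ≠ 0)
    (lb : L →ₗ[K] L →ₗ[K] L) (α : L →ₗ[K] L)
    (hanti : ∀ a b, lb a b = - lb b a)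
    (hjac : ∀ a b c, lb (α a) (lb b c) + lb (α b) (lb c a) + lb (α c) (lb a b) = 0)
    (lb' : L' →ₗ[K] L' →ₗ[K] L') (α' : L' →ₗ[K] L')
    (hanti' : ∀ a b, lb' a b = - lb' b a)
    (hjac' : ∀ a b c,
      lb' (α' a) (lb' b c) + lb' (α' b) (lb' c a) + lb' (α' c) (lb' a b) = 0)
    (κ lam : L →ₗ[K] L) (r : L)
    (hκα : ∀ a, κ (α a) = α (κ a)) (hlama : ∀ a, lam (α a) = α (lam a))
    (hcompat : ∀ a b,
      lam (lb a b) = lb (lam a) (α b) - lb (α a) (κ b) + lb (α a) (lam b))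
    (κ' lam' : L' →ₗ[K] L') (r' : L')
    (hκα' : ∀ a, κ' (α' a) = α' (κ' a)) (hlama' : ∀ a, lam' (α' a) = α' (lam' a))
    (hcompat' : ∀ a b,
      lam' (lb' a b) = lb' (lam' a) (α' b) - lb' (α' a) (κ' b) + lb' (α' a) (lam' b))
    (br : L → L → L) (hbr : ∀ a b, br a b = lb a b + κ a + lam (b - a) + r)
    (br' : L' → L' → L') (hbr' : ∀ a b, br' a b = lb' a b + κ' a + lam' (b - a) + r')
    (φ : L → L')
    -- φ is an affine map
    (haff1 : ∀ a b c : L, φ (a - b + c) = φ a - φ b + φ c)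
    (haff2 : ∀ (ξ : K) (a b : L),
      φ (ξ • b + (1 - ξ) • a) = ξ • φ b + (1 - ξ) • φ a)
    -- φ intertwines the twist maps and preserves the brackets
    (hφα : ∀ a, φ (α a) = α' (φ a))
    (hφbr : ∀ a b, φ (br a b) = br' (φ a) (φ b)) :
    let ψ : L → L' := fun a => φ a - φ 0
    let q' : L' := φ 0
    -- ψ is a Hom-Lie algebra homomorphism
    (∀ a b, ψ (a + b) = ψ a + ψ b) ∧
    (∀ (ξ : K) (a : L), ψ (ξ • a) = ξ • ψ a) ∧
    (∀ a b, ψ (lb a b) = lb' (ψ a) (ψ b)) ∧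
    (∀ a, ψ (α a) = α' (ψ a)) ∧
    -- the four compatibility conditions
    q' = α' q' ∧
    (∀ a, ψ (κ a) = κ' (ψ a)) ∧
    (∀ a, ψ (lam a) = lb' q' (ψ a) + lam' (ψ a)) ∧
    ψ r = r' - q' + κ' q' :=
  stmt_19_general h2 lb α lb' α' hanti' κ lam r κ' lam' r' br hbr br' hbr' φ haff1 haff2 hφα hφbr
end
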